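/- For every natural number n ≥ 1, one has n · Vol(Bⁿ) · ∫_0^∞ r^{n−1} (2/(1+r²))ⁿ dr = (n+1) · Vol(B^{n+1}), where Vol(Bᵏ) denotes the Lebesgue measure of the open unit ball of the k-dimensional Euclidean space. -/

import Mathlib

/-!
The substitution `r = tan (θ / 2)` turns the radial integral into the Wallis integral
`∫₀^π sin^(n-1) θ dθ`. Both sides of the identity then obey the same two-step recursion in `n`,
by the Wallis reduction formula and `Γ(s + 1) = s Γ(s)` in `Vol(Bⁿ) = π^(n/2) / Γ(n/2 + 1)`,
and they agree for `n = 1, 2`.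
-/

open MeasureTheory Real Set

noncomputable def unitBallVolume (n : ℕ) : ℝ :=
  (volume (Metric.ball (0 : EuclideanSpace ℝ (Fin n)) 1)).toReal

lemma unitBallVolume_eq {n : ℕ} (hn : n ≠ 0) :
    unitBallVolume n = √π ^ n / Gamma (n / 2 + 1) := by
  have : Nonempty (Fin n) := Fin.pos_iff_nonempty.mp (Nat.pos_of_ne_zero hn)
  rw [unitBallVolume, EuclideanSpace.volume_ball, Fintype.card_fin, ENNReal.ofReal_one, one_pow,
    one_mul, ENNReal.toReal_ofReal (by positivity)]

lemma unitBallVolume_add_two {n : ℕ} (hn : n ≠ 0) :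
    unitBallVolume (n + 2) = 2 * π / (n + 2) * unitBallVolume n := by
  have hΓ : Gamma ((n + 2 : ℕ) / 2 + 1) = (n / 2 + 1) * Gamma (n / 2 + 1) := by
    rw [← Gamma_add_one (by positivity)]; push_cast; ring_nf
  rw [unitBallVolume_eq hn, unitBallVolume_eq (by omega), hΓ, pow_add, sq_sqrt pi_pos.le]
  have := (Gamma_pos_of_pos (by positivity : (0 : ℝ) < n / 2 + 1)).ne'
  field_simp

lemma unitBallVolume_one : unitBallVolume 1 = 2 := by
  rw [unitBallVolume_eq one_ne_zero, show ((1 : ℕ) : ℝ) / 2 + 1 = 1 / 2 + 1 by norm_num,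
    Gamma_add_one (by norm_num), Gamma_one_half_eq]
  have := sqrt_pos.mpr pi_pos
  field_simp

lemma unitBallVolume_two : unitBallVolume 2 = π := by
  rw [unitBallVolume_eq two_ne_zero, show ((2 : ℕ) : ℝ) / 2 + 1 = 2 by norm_num, Gamma_two,
    sq_sqrt pi_pos.le, div_one]

lemma integral_sin_pow_add_two_zero_pi (k : ℕ) :
    ∫ x in 0..π, sin x ^ (k + 2) = (k + 1) / (k + 2) * ∫ x in 0..π, sin x ^ k := by
  simp [integral_sin_pow]

lemma succ_mul_unitBallVolume_mul_integral_sin_pow (m : ℕ) :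
    (m + 1) * unitBallVolume (m + 1) * ∫ x in 0..π, sin x ^ m
      = (m + 2) * unitBallVolume (m + 2) := by
  induction m using Nat.twoStepInduction with
  | zero => simp [unitBallVolume_one, unitBallVolume_two]
  | one =>
    norm_num [unitBallVolume_add_two one_ne_zero, unitBallVolume_one, unitBallVolume_two]
    ring
  | more k ih _ =>
    rw [integral_sin_pow_add_two_zero_pi, unitBallVolume_add_two k.succ_ne_zero,
      unitBallVolume_add_two (by omega : k + 2 ≠ 0)]
    push_cast at ih ⊢
    field_simp
    linear_combination (k + 3 : ℝ) * ih

lemma sin_two_mul_arctan (r : ℝ) : sin (2 * arctan r) = 2 * r / (1 + r ^ 2) := by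
  have h : √(1 + r ^ 2) ^ 2 = 1 + r ^ 2 := sq_sqrt (by positivity)
  rw [sin_two_mul, sin_arctan, cos_arctan]
  field_simp
  rw [h]

lemma image_two_mul_arctan_Ioi : (2 * arctan ·) '' Ioi 0 = Ioo 0 π := by
  ext θ
  constructor
  · rintro ⟨r, hr, rfl⟩
    have : 0 < arctan r := by simpa using arctan_strictMono (mem_Ioi.mp hr)
    exact ⟨by positivity, by linarith [arctan_lt_pi_div_two r]⟩
  · rintro ⟨h0, hπ⟩
    refine ⟨tan (θ / 2), tan_pos_of_pos_of_lt_pi_div_two (by linarith) (by linarith), ?_⟩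
    simp only
    rw [arctan_tan (by linarith) (by linarith)]
    ring

lemma integral_Ioi_comp_two_mul_arctan {E : Type*} [NormedAddCommGroup E] [NormedSpace ℝ E]
    (g : ℝ → E) : ∫ r in Ioi 0, (2 / (1 + r ^ 2)) • g (2 * arctan r) = ∫ θ in Ioo 0 π, g θ := by
  rw [← image_two_mul_arctan_Ioi]
  refine (integral_image_eq_integral_deriv_smul_of_monotoneOn measurableSet_Ioi
    (fun r _ ↦ ?_) (fun a _ b _ hab ↦ ?_) g).symm
  · simpa [div_eq_mul_inv] using ((hasDerivAt_arctan r).const_mul 2).hasDerivWithinAt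
  · simpa using arctan_mono hab

lemma integral_Ioi_pow_mul_two_div_one_add_sq_pow (m : ℕ) :
    ∫ r in Ioi 0, r ^ m * (2 / (1 + r ^ 2)) ^ (m + 1) = ∫ θ in 0..π, sin θ ^ m := by
  rw [intervalIntegral.integral_of_le pi_pos.le, integral_Ioc_eq_integral_Ioo,
    ← integral_Ioi_comp_two_mul_arctan]
  congr 1 with r
  rw [sin_two_mul_arctan, smul_eq_mul]
  ring

/-- The identity `ω_{n-1} · I = ω_n`, where `I = ∫_0^∞ r^{n-1}(2/(1+r²))ⁿ dr`,
`ω_{n-1} = n·Vol(Bⁿ)` is the surface measure of `S^{n-1} ⊂ ℝⁿ` and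
`ω_n = (n+1)·Vol(B^{n+1})` is the surface measure of `Sⁿ ⊂ ℝ^{n+1}`. -/
theorem sphere_volume_radial_integral (n : ℕ) (hn : 1 ≤ n) :
    (n : ℝ) * (volume (Metric.ball (0 : EuclideanSpace ℝ (Fin n)) 1)).toReal *
        ∫ r in Set.Ioi (0 : ℝ), r ^ (n - 1) * (2 / (1 + r ^ 2)) ^ n
      = ((n : ℝ) + 1) *
        (volume (Metric.ball (0 : EuclideanSpace ℝ (Fin (n + 1))) 1)).toReal := by
  obtain ⟨m, rfl⟩ := Nat.exists_eq_add_of_le' hn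
  rw [Nat.add_sub_cancel, integral_Ioi_pow_mul_two_div_one_add_sq_pow, Nat.cast_add_one, add_assoc, one_add_one_eq_two]
  exact succ_mul_unitBallVolume_mul_integral_sin_pow m
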